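/- Let f, g_1,…,g_m ∈ ℝ[X] have integer coefficients and degrees at most d, set g_0 := 1 and S := {x ∈ ℝⁿ : g_1(x) ≥ 0,…,g_m(x) ≥ 0}, and assume S is nonempty, compact, contained in [−1,1]ⁿ, has nonempty interior, and Q(S) is archimedean. Assume f(x) > 0 for all x ∈ S, and let f* := min_{x∈S} f(x) > 0. For D ∈ ℕ set f_D* := sup{b ∈ ℝ : f − b ∈ Q_D(S)}. Then there exists D_0 ∈ ℕ such that for every even integer D ≥ D_0 one has 0 < f_D* ≤ f*. -/

import Mathlib

/-!
Putinar's Positivstellensatz gives `f - f*/2 ∈ Q(S)`; the degrees of that single representation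
give a `D₀` with `f*/2 ∈ {b | f - b ∈ Q_D(S)}` for all `D ≥ D₀`, while every such `b` satisfies
`b ≤ f` on `S`, hence `b ≤ f*`.

Putinar's theorem is Jacobi's representation theorem for the archimedean module `M = Q(S)`.
If `-1 ∈ M - Σ²·h`, then `s h ∈ 1 + M` for a sum of squares `s`, and archimedeanity lets one
lower the constant in `h + δ ∈ M` step by step down to `h ∈ M`. Otherwise a maximal proper
quadratic module `P ⊇ M - Σ²·h` is total, and `a ↦ inf {r | r - a ∈ P}` is an `ℝ`-algebra
homomorphism to `ℝ`, i.e. evaluation at a point of `S` where `h ≤ 0`.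
-/

open MvPolynomial

noncomputable section

/-- `f` is a sum of squares of polynomials. -/
def IsSOS {n : ℕ} (f : MvPolynomial (Fin n) ℝ) : Prop :=
  ∃ (r : ℕ) (s : Fin r → MvPolynomial (Fin n) ℝ), f = ∑ i, (s i) ^ 2

/-- Membership in the quadratic module generated by `g_1,…,g_m` (with `g_0 := 1`). -/
def InQM {n m : ℕ} (g : Fin m → MvPolynomial (Fin n) ℝ) (f : MvPolynomial (Fin n) ℝ) : Prop :=
  ∃ σ0 : MvPolynomial (Fin n) ℝ, ∃ σ : Fin m → MvPolynomial (Fin n) ℝ,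
    IsSOS σ0 ∧ (∀ j, IsSOS (σ j)) ∧ f = σ0 + ∑ j, σ j * g j

/-- Membership in the `D`-truncated quadratic module generated by `g_1,…,g_m`
(with `g_0 := 1`): a representation `f = Σ_j σ_j g_j` with `deg (σ_j g_j) ≤ D`. -/
def InQMT {n m : ℕ} (D : ℕ) (g : Fin m → MvPolynomial (Fin n) ℝ)
    (f : MvPolynomial (Fin n) ℝ) : Prop :=
  ∃ σ0 : MvPolynomial (Fin n) ℝ, ∃ σ : Fin m → MvPolynomial (Fin n) ℝ,
    IsSOS σ0 ∧ σ0.totalDegree ≤ D ∧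
    (∀ j, IsSOS (σ j) ∧ (σ j * g j).totalDegree ≤ D) ∧
    f = σ0 + ∑ j, σ j * g j

section QuadraticModule

variable {A : Type*} [CommRing A] {M : Set A}

structure IsQuadraticModule (M : Set A) : Prop where
  one_mem : 1 ∈ M
  add_mem {a b : A} : a ∈ M → b ∈ M → a + b ∈ M
  mul_self_mul_mem (p : A) {a : A} : a ∈ M → p * p * a ∈ M

namespace IsQuadraticModule

theorem zero_mem (hM : IsQuadraticModule M) : 0 ∈ M := by
  simpa using hM.mul_self_mul_mem 0 hM.one_mem

theorem sum_mem (hM : IsQuadraticModule M) {ι : Type*} {s : Finset ι} {f : ι → A}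
    (hf : ∀ i ∈ s, f i ∈ M) : ∑ i ∈ s, f i ∈ M :=
  Finset.sum_induction f (· ∈ M) (fun _ _ => hM.add_mem) hM.zero_mem hf

theorem sumSq_mul_mem (hM : IsQuadraticModule M) {s a : A} (hs : IsSumSq s) (ha : a ∈ M) :
    s * a ∈ M := by
  induction hs with
  | zero => simpa using hM.zero_mem
  | sq_add b _ ih => simpa only [add_mul] using hM.add_mem (hM.mul_self_mul_mem b ha) ih

theorem sumSq_mem (hM : IsQuadraticModule M) {s : A} (hs : IsSumSq s) : s ∈ M := by
  simpa using hM.sumSq_mul_mem hs hM.one_mem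

end IsQuadraticModule

theorem isQuadraticModule_setOf_nonneg (φ : A →+* ℝ) : IsQuadraticModule {a | 0 ≤ φ a} where
  one_mem := by simp
  add_mem ha hb := by simpa using add_nonneg ha hb
  mul_self_mul_mem p a ha := by simpa using mul_nonneg (mul_self_nonneg (φ p)) ha

def quadModAdjoin (M : Set A) (a : A) : Set A :=
  {u | ∃ p ∈ M, ∃ s, IsSumSq s ∧ u = p + s * a}

theorem subset_quadModAdjoin (a : A) : M ⊆ quadModAdjoin M a :=
  fun p hp => ⟨p, hp, 0, .zero, by simp⟩

namespace IsQuadraticModule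

theorem mem_quadModAdjoin_self (hM : IsQuadraticModule M) (a : A) : a ∈ quadModAdjoin M a :=
  ⟨0, hM.zero_mem, 1, .one, by simp⟩

theorem adjoin (hM : IsQuadraticModule M) (a : A) :
    IsQuadraticModule (quadModAdjoin M a) where
  one_mem := ⟨1, hM.one_mem, 0, .zero, by simp⟩
  add_mem := by
    rintro _ _ ⟨p₁, hp₁, s₁, hs₁, rfl⟩ ⟨p₂, hp₂, s₂, hs₂, rfl⟩
    exact ⟨p₁ + p₂, hM.add_mem hp₁ hp₂, s₁ + s₂, hs₁.add hs₂, by ring⟩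
  mul_self_mul_mem q := by
    rintro _ ⟨p, hp, s, hs, rfl⟩
    exact ⟨q * q * p, hM.mul_self_mul_mem q hp, q * q * s, (IsSumSq.mul_self q).mul hs, by ring⟩

end IsQuadraticModule

theorem exists_maximal_isQuadraticModule (hM : IsQuadraticModule M) (hM₁ : (-1 : A) ∉ M) :
    ∃ P, M ⊆ P ∧ Maximal (fun Q => IsQuadraticModule Q ∧ (-1 : A) ∉ Q) P := by
  refine zorn_subset_nonempty {Q | IsQuadraticModule Q ∧ (-1 : A) ∉ Q}
    (fun c hc hchain ⟨Q, hQ⟩ => ⟨⋃₀ c, ⟨⟨⟨Q, hQ, (hc hQ).1.one_mem⟩, ?_, ?_⟩, ?_⟩,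
      fun _ => Set.subset_sUnion_of_mem⟩) M ⟨hM, hM₁⟩
  · rintro a b ⟨Qa, hQa, ha⟩ ⟨Qb, hQb, hb⟩
    rcases hchain.total hQa hQb with hab | hba
    · exact ⟨Qb, hQb, (hc hQb).1.add_mem (hab ha) hb⟩
    · exact ⟨Qa, hQa, (hc hQa).1.add_mem ha (hba hb)⟩
  · rintro p a ⟨Q, hQ, ha⟩
    exact ⟨Q, hQ, (hc hQ).1.mul_self_mul_mem p ha⟩
  · rintro ⟨Q, hQ, h⟩
    exact (hc hQ).2 h

end QuadraticModule

section RealAlgebra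

variable {A : Type*} [CommRing A] [Algebra ℝ A] {M : Set A}

namespace IsQuadraticModule

theorem algebraMap_mul_mem (hM : IsQuadraticModule M) {c : ℝ} (hc : 0 ≤ c) {a : A}
    (ha : a ∈ M) : algebraMap ℝ A c * a ∈ M := by
  have hsq : algebraMap ℝ A c = algebraMap ℝ A √c * algebraMap ℝ A √c := by
    rw [← map_mul, Real.mul_self_sqrt hc]
  exact hsq ▸ hM.mul_self_mul_mem _ ha

theorem algebraMap_mem (hM : IsQuadraticModule M) {c : ℝ} (hc : 0 ≤ c) :
    algebraMap ℝ A c ∈ M := by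
  simpa using hM.algebraMap_mul_mem hc hM.one_mem

theorem nonneg_of_algebraMap_mem (hM : IsQuadraticModule M) (hM₁ : (-1 : A) ∉ M) {c : ℝ}
    (hc : algebraMap ℝ A c ∈ M) : 0 ≤ c := by
  by_contra! hneg
  refine hM₁ ?_
  convert hM.algebraMap_mul_mem (inv_nonneg.2 (neg_nonneg.2 hneg.le)) hc using 1
  rw [← map_mul, inv_neg, neg_mul, inv_mul_cancel₀ hneg.ne, map_neg, map_one]

theorem algebraMap_sub_mem_of_le (hM : IsQuadraticModule M) {a : A} {r r' : ℝ}
    (h : algebraMap ℝ A r - a ∈ M) (hrr' : r ≤ r') : algebraMap ℝ A r' - a ∈ M := by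
  convert hM.add_mem h (hM.algebraMap_mem (sub_nonneg.2 hrr')) using 1
  rw [map_sub]
  ring

end IsQuadraticModule

def IsArchimedeanQM (M : Set A) : Prop :=
  ∀ a : A, ∃ c : ℝ, algebraMap ℝ A c - a ∈ M

theorem IsArchimedeanQM.mono {M M' : Set A} (h : IsArchimedeanQM M) (hMM' : M ⊆ M') :
    IsArchimedeanQM M' :=
  fun a => (h a).imp fun _ hc => hMM' hc

namespace IsQuadraticModule

def boundedSubalgebra (hM : IsQuadraticModule M) : Subalgebra ℝ A where
  carrier := {a | ∃ c : ℝ, 0 ≤ c ∧ algebraMap ℝ A c - a * a ∈ M}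
  algebraMap_mem' r := ⟨r * r, mul_self_nonneg r, by simpa using hM.zero_mem⟩
  add_mem' := by
    rintro a b ⟨c₁, hc₁, h₁⟩ ⟨c₂, hc₂, h₂⟩
    refine ⟨2 * (c₁ + c₂), by positivity, ?_⟩
    convert hM.add_mem (hM.add_mem (hM.algebraMap_mul_mem zero_le_two h₁)
      (hM.algebraMap_mul_mem zero_le_two h₂)) (hM.mul_self_mul_mem (a - b) hM.one_mem) using 1
    simp only [map_mul, map_add, map_ofNat]
    ring
  mul_mem' := by
    rintro a b ⟨c₁, hc₁, h₁⟩ ⟨c₂, hc₂, h₂⟩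
    refine ⟨c₁ * c₂, mul_nonneg hc₁ hc₂, ?_⟩
    convert hM.add_mem (hM.mul_self_mul_mem b h₁) (hM.algebraMap_mul_mem hc₁ h₂) using 1
    rw [map_mul]
    ring

theorem isArchimedeanQM_of_adjoin_eq_top (hM : IsQuadraticModule M) {s : Set A}
    (hs : Algebra.adjoin ℝ s = ⊤) (hbdd : ∀ a ∈ s, ∃ c : ℝ, algebraMap ℝ A c - a * a ∈ M) :
    IsArchimedeanQM M := by
  have htop : hM.boundedSubalgebra = ⊤ := by
    refine eq_top_iff.2 (hs ▸ Algebra.adjoin_le fun a ha => ?_)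
    obtain ⟨c, hc⟩ := hbdd a ha
    exact ⟨max c 0, le_max_right c 0, hM.algebraMap_sub_mem_of_le hc (le_max_left c 0)⟩
  intro a
  obtain ⟨c, -, hc⟩ : a ∈ hM.boundedSubalgebra := htop ▸ Algebra.mem_top
  -- `(c + 1) / 2 - a = ((c - a²) + (1 - a)²) / 2`
  refine ⟨(c + 1) / 2, ?_⟩
  convert hM.algebraMap_mul_mem (inv_nonneg.2 zero_le_two)
    (hM.add_mem hc (hM.mul_self_mul_mem (1 - a) hM.one_mem)) using 1
  rw [show (c + 1) / 2 = 2⁻¹ * c + 2⁻¹ * 1 by ring]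
  simp only [map_add, map_mul, map_one]
  have hhalf : algebraMap ℝ A 2⁻¹ * 2 = 1 := by
    rw [← map_ofNat (algebraMap ℝ A) 2, ← map_mul, inv_mul_cancel₀ two_ne_zero, map_one]
  linear_combination a * hhalf

/-- With `ε = c⁻¹` and `w = s + s q + δ₀ s²`, the certificate is
`(1 - ε s)² (h + δ) + 2ε q + 2εδ s + ε² (c - w) + ε² (δ₀ - δ) s² = h + δ - ε`. -/
theorem add_algebraMap_sub_inv_mem (hM : IsQuadraticModule M) {s q h : A} (hs : IsSumSq s)
    (hq : q ∈ M) (hsh : s * h = 1 + q) {c δ₀ δ : ℝ} (hc : 0 < c)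
    (hcw : algebraMap ℝ A c - (s + s * q + algebraMap ℝ A δ₀ * (s * s)) ∈ M)
    (hδ : 0 ≤ δ) (hδδ₀ : δ ≤ δ₀) (hhδ : h + algebraMap ℝ A δ ∈ M) :
    h + algebraMap ℝ A (δ - c⁻¹) ∈ M := by
  set ε := c⁻¹
  have hε : 0 ≤ ε := inv_nonneg.2 hc.le
  have hεc : algebraMap ℝ A ε * algebraMap ℝ A c = 1 := by
    rw [← map_mul, inv_mul_cancel₀ hc.ne', map_one]
  have hmem := hM.add_mem (hM.add_mem (hM.add_mem (hM.add_mem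
    (hM.mul_self_mul_mem (1 - algebraMap ℝ A ε * s) hhδ)
    (hM.algebraMap_mul_mem (by positivity : 0 ≤ 2 * ε) hq))
    (hM.algebraMap_mul_mem (by positivity : 0 ≤ 2 * ε * δ) (hM.sumSq_mem hs)))
    (hM.algebraMap_mul_mem (by positivity : 0 ≤ ε * ε) hcw))
    (hM.algebraMap_mul_mem (mul_nonneg (mul_self_nonneg ε) (sub_nonneg.2 hδδ₀))
      (hM.sumSq_mem (.mul_self s)))
  convert hmem using 1
  simp only [map_mul, map_sub, map_ofNat]
  linear_combination (2 * algebraMap ℝ A ε - algebraMap ℝ A ε * algebraMap ℝ A ε * s) * hsh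
    - algebraMap ℝ A ε * hεc

/-- Starting from `h + δ₀ ∈ M`, the constant is lowered by the fixed amount `c⁻¹` until it
becomes negative. -/
theorem mem_of_mul_eq_one_add (hM : IsQuadraticModule M) (harch : IsArchimedeanQM M)
    {s q h : A} (hs : IsSumSq s) (hq : q ∈ M) (hsh : s * h = 1 + q) : h ∈ M := by
  obtain ⟨δ₀, hδ₀, hhδ₀⟩ : ∃ δ₀ : ℝ, 0 ≤ δ₀ ∧ h + algebraMap ℝ A δ₀ ∈ M := by
    obtain ⟨c, hc⟩ := harch (-h)
    refine ⟨max c 0, le_max_right c 0, ?_⟩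
    simpa [add_comm] using hM.algebraMap_sub_mem_of_le hc (le_max_left c 0)
  obtain ⟨c, hc, hcw⟩ : ∃ c : ℝ, 0 < c ∧
      algebraMap ℝ A c - (s + s * q + algebraMap ℝ A δ₀ * (s * s)) ∈ M := by
    obtain ⟨c, hc⟩ := harch (s + s * q + algebraMap ℝ A δ₀ * (s * s))
    exact ⟨max c 1, by positivity, hM.algebraMap_sub_mem_of_le hc (le_max_left c 1)⟩
  have hdescent : ∀ k : ℕ, ∀ δ : ℝ, 0 ≤ δ → δ ≤ δ₀ → δ < k * c⁻¹ →
      h + algebraMap ℝ A δ ∈ M → h ∈ M := by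
    intro k
    induction k with
    | zero => intro δ hδ _ hlt _; simp at hlt; linarith
    | succ k ih =>
      intro δ hδ hδδ₀ hlt hhδ
      have hnext := hM.add_algebraMap_sub_inv_mem hs hq hsh hc hcw hδ hδδ₀ hhδ
      by_cases hneg : δ - c⁻¹ < 0
      · convert hM.add_mem hnext (hM.algebraMap_mem (neg_nonneg.2 hneg.le)) using 1
        rw [map_neg]
        ring
      · push_cast at hlt
        exact ih _ (not_lt.1 hneg) (by linarith [inv_pos.2 hc]) (by linarith) hnext
  obtain ⟨k, hk⟩ := exists_nat_gt (δ₀ * c)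
  exact hdescent k δ₀ hδ₀ le_rfl (by rwa [← div_eq_mul_inv, lt_div_iff₀ hc]) hhδ₀

end IsQuadraticModule

theorem mem_or_neg_mem_of_maximal {P : Set A}
    (hP : Maximal (fun Q => IsQuadraticModule Q ∧ (-1 : A) ∉ Q) P) (harch : IsArchimedeanQM P)
    (a : A) : a ∈ P ∨ -a ∈ P := by
  have hQ := hP.prop.1
  -- by maximality, adjoining any `b ∉ P` produces `-1`
  have hneg_one : ∀ b ∉ P, ∃ p ∈ P, ∃ s, IsSumSq s ∧ -1 = p + s * b := fun b hb => by
    by_contra h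
    exact hb (hP.2 ⟨hQ.adjoin b, h⟩ (subset_quadModAdjoin b) (hQ.mem_quadModAdjoin_self b))
  by_contra! hboth
  obtain ⟨p₁, hp₁, s₁, hs₁, h₁⟩ := hneg_one a hboth.1
  obtain ⟨p₂, hp₂, s₂, hs₂, h₂⟩ := hneg_one (-a) hboth.2
  obtain ⟨k, hk, hka, hka'⟩ : ∃ k : ℝ, 0 ≤ k ∧
      algebraMap ℝ A k - a ∈ P ∧ algebraMap ℝ A k - -a ∈ P := by
    obtain ⟨c₁, hc₁⟩ := harch a
    obtain ⟨c₂, hc₂⟩ := harch (-a)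
    exact ⟨max (max c₁ c₂) 0, le_max_right _ _,
      hQ.algebraMap_sub_mem_of_le hc₁ ((le_max_left _ _).trans (le_max_left _ _)),
      hQ.algebraMap_sub_mem_of_le hc₂ ((le_max_right _ _).trans (le_max_left _ _))⟩
  have hmem : algebraMap ℝ A (-2) ∈ P := by
    convert hQ.add_mem (hQ.add_mem (hQ.add_mem (hQ.sumSq_mul_mem hs₁ hka')
      (hQ.sumSq_mul_mem hs₂ hka)) (hQ.algebraMap_mul_mem hk (hQ.add_mem
        (hQ.sumSq_mul_mem hs₂ hp₁) (hQ.sumSq_mul_mem hs₁ hp₂)))) (hQ.add_mem hp₁ hp₂) using 1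
    simp only [map_neg, map_ofNat]
    linear_combination (1 + algebraMap ℝ A k * s₂) * h₁ + (1 + algebraMap ℝ A k * s₁) * h₂
  linarith [hQ.nonneg_of_algebraMap_mem hP.prop.2 hmem]

structure IsTotalArchimedean (P : Set A) : Prop extends IsQuadraticModule P where
  neg_one_notMem : (-1 : A) ∉ P
  mem_or_neg_mem (a : A) : a ∈ P ∨ -a ∈ P
  archimedean : IsArchimedeanQM P

theorem isTotalArchimedean_of_maximal {P : Set A}
    (hP : Maximal (fun Q => IsQuadraticModule Q ∧ (-1 : A) ∉ Q) P) (harch : IsArchimedeanQM P) :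
    IsTotalArchimedean P :=
  { hP.prop.1 with
    neg_one_notMem := hP.prop.2
    mem_or_neg_mem := mem_or_neg_mem_of_maximal hP harch
    archimedean := harch }

def infUpperBound (P : Set A) (a : A) : ℝ :=
  sInf {r : ℝ | algebraMap ℝ A r - a ∈ P}

namespace IsTotalArchimedean

variable {P : Set A}

theorem bddBelow (hP : IsTotalArchimedean P) (a : A) :
    BddBelow {r : ℝ | algebraMap ℝ A r - a ∈ P} := by
  obtain ⟨c, hc⟩ := hP.archimedean (-a)
  refine ⟨-c, fun r hr => ?_⟩
  have hsum : algebraMap ℝ A (r + c) ∈ P := by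
    convert hP.add_mem hr hc using 1
    rw [map_add]
    ring
  linarith [hP.nonneg_of_algebraMap_mem hP.neg_one_notMem hsum]

theorem infUpperBound_le (hP : IsTotalArchimedean P) {a : A} {r : ℝ}
    (h : algebraMap ℝ A r - a ∈ P) : infUpperBound P a ≤ r :=
  csInf_le (hP.bddBelow a) h

theorem le_infUpperBound (hP : IsTotalArchimedean P) {a : A} {r : ℝ}
    (h : a - algebraMap ℝ A r ∈ P) : r ≤ infUpperBound P a := by
  refine le_csInf (hP.archimedean a) fun r' hr' => ?_
  have hsum : algebraMap ℝ A (r' - r) ∈ P := by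
    convert hP.add_mem hr' h using 1
    rw [map_sub]
    ring
  linarith [hP.nonneg_of_algebraMap_mem hP.neg_one_notMem hsum]

theorem algebraMap_sub_mem (hP : IsTotalArchimedean P) (a : A) {ε : ℝ} (hε : 0 < ε) :
    algebraMap ℝ A (infUpperBound P a + ε) - a ∈ P := by
  obtain ⟨r, hr, hlt⟩ :=
    (csInf_lt_iff (hP.bddBelow a) (hP.archimedean a)).1 (lt_add_of_pos_right _ hε)
  exact hP.algebraMap_sub_mem_of_le hr hlt.le

theorem sub_algebraMap_mem (hP : IsTotalArchimedean P) (a : A) {ε : ℝ} (hε : 0 < ε) :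
    a - algebraMap ℝ A (infUpperBound P a - ε) ∈ P := by
  rcases hP.mem_or_neg_mem (algebraMap ℝ A (infUpperBound P a - ε) - a) with h | h
  · linarith [hP.infUpperBound_le h]
  · rwa [neg_sub] at h

theorem infUpperBound_eq (hP : IsTotalArchimedean P) {a : A} {t : ℝ}
    (h : ∀ ε > 0, algebraMap ℝ A (t + ε) - a ∈ P ∧ a - algebraMap ℝ A (t - ε) ∈ P) :
    infUpperBound P a = t := by
  refine le_antisymm (le_of_forall_pos_le_add fun ε hε => hP.infUpperBound_le (h ε hε).1)
    (le_of_forall_pos_le_add fun ε hε => ?_)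
  linarith [hP.le_infUpperBound (h ε hε).2]

theorem infUpperBound_nonneg (hP : IsTotalArchimedean P) {a : A} (ha : a ∈ P) :
    0 ≤ infUpperBound P a :=
  hP.le_infUpperBound (by simpa using ha)

theorem infUpperBound_algebraMap (hP : IsTotalArchimedean P) (r : ℝ) :
    infUpperBound P (algebraMap ℝ A r) = r := by
  refine hP.infUpperBound_eq fun ε hε => ⟨?_, ?_⟩
  · rw [← map_sub, add_sub_cancel_left]
    exact hP.algebraMap_mem hε.le
  · rw [← map_sub, sub_sub_cancel]
    exact hP.algebraMap_mem hε.le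

theorem infUpperBound_neg (hP : IsTotalArchimedean P) (a : A) :
    infUpperBound P (-a) = -infUpperBound P a := by
  refine hP.infUpperBound_eq fun ε hε => ⟨?_, ?_⟩
  · convert hP.sub_algebraMap_mem a hε using 1
    simp only [map_add, map_sub, map_neg]
    ring
  · convert hP.algebraMap_sub_mem a hε using 1
    simp only [map_add, map_sub, map_neg]
    ring

theorem infUpperBound_add (hP : IsTotalArchimedean P) (a b : A) :
    infUpperBound P (a + b) = infUpperBound P a + infUpperBound P b := by
  refine hP.infUpperBound_eq fun ε hε => ⟨?_, ?_⟩
  · convert hP.add_mem (hP.algebraMap_sub_mem a (half_pos hε))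
      (hP.algebraMap_sub_mem b (half_pos hε)) using 1
    rw [show infUpperBound P a + infUpperBound P b + ε
      = (infUpperBound P a + ε / 2) + (infUpperBound P b + ε / 2) by ring, map_add]
    ring
  · convert hP.add_mem (hP.sub_algebraMap_mem a (half_pos hε))
      (hP.sub_algebraMap_mem b (half_pos hε)) using 1
    rw [show infUpperBound P a + infUpperBound P b - ε
      = (infUpperBound P a - ε / 2) + (infUpperBound P b - ε / 2) by ring, map_add]
    ring

theorem infUpperBound_sub (hP : IsTotalArchimedean P) (a b : A) :
    infUpperBound P (a - b) = infUpperBound P a - infUpperBound P b := by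
  rw [sub_eq_add_neg, hP.infUpperBound_add, hP.infUpperBound_neg, sub_eq_add_neg]

theorem infUpperBound_algebraMap_mul_of_pos (hP : IsTotalArchimedean P) {c : ℝ} (hc : 0 < c)
    (a : A) : infUpperBound P (algebraMap ℝ A c * a) = c * infUpperBound P a := by
  refine hP.infUpperBound_eq fun ε hε => ⟨?_, ?_⟩
  · convert hP.algebraMap_mul_mem hc.le (hP.algebraMap_sub_mem a (div_pos hε hc)) using 1
    rw [mul_sub, ← map_mul, mul_add, mul_div_cancel₀ _ hc.ne']
  · convert hP.algebraMap_mul_mem hc.le (hP.sub_algebraMap_mem a (div_pos hε hc)) using 1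
    rw [mul_sub, ← map_mul, mul_sub, mul_div_cancel₀ _ hc.ne']

theorem infUpperBound_algebraMap_mul (hP : IsTotalArchimedean P) (c : ℝ) (a : A) :
    infUpperBound P (algebraMap ℝ A c * a) = c * infUpperBound P a := by
  rcases lt_trichotomy c 0 with hc | rfl | hc
  · have h := hP.infUpperBound_algebraMap_mul_of_pos (neg_pos.2 hc) a
    rw [map_neg, neg_mul, hP.infUpperBound_neg] at h
    linarith
  · simpa using hP.infUpperBound_algebraMap 0
  · exact hP.infUpperBound_algebraMap_mul_of_pos hc a

/-- For `η > 0`, `(η + c)² (η - c) + (η - c)² (η + c) = 2η (η² - c²)` lies in `P`. -/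
theorem infUpperBound_mul_self_eq_zero (hP : IsTotalArchimedean P) {c : A}
    (hc : infUpperBound P c = 0) : infUpperBound P (c * c) = 0 := by
  refine le_antisymm (le_of_forall_pos_le_add fun ε hε => ?_)
    (hP.infUpperBound_nonneg (by simpa using hP.mul_self_mul_mem c hP.one_mem))
  set η := √ε
  have hη : 0 < η := Real.sqrt_pos.2 hε
  have h₁ := hP.algebraMap_sub_mem c hη
  have h₂ := hP.sub_algebraMap_mem c hη
  rw [hc, zero_add] at h₁
  rw [hc, zero_sub, map_neg, sub_neg_eq_add] at h₂
  have hE := hP.infUpperBound_nonneg (hP.add_mem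
    (hP.mul_self_mul_mem (c + algebraMap ℝ A η) h₁) (hP.mul_self_mul_mem (algebraMap ℝ A η - c) h₂))
  rw [show (c + algebraMap ℝ A η) * (c + algebraMap ℝ A η) * (algebraMap ℝ A η - c)
      + (algebraMap ℝ A η - c) * (algebraMap ℝ A η - c) * (c + algebraMap ℝ A η)
      = algebraMap ℝ A (2 * η) * (algebraMap ℝ A (η * η) - c * c) by
        simp only [map_mul, map_ofNat]; ring,
    hP.infUpperBound_algebraMap_mul, hP.infUpperBound_sub, hP.infUpperBound_algebraMap,
    Real.mul_self_sqrt hε.le] at hE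
  linarith [nonneg_of_mul_nonneg_right hE (by positivity)]

theorem infUpperBound_mul_self (hP : IsTotalArchimedean P) (a : A) :
    infUpperBound P (a * a) = infUpperBound P a * infUpperBound P a := by
  set t := infUpperBound P a
  have h := hP.infUpperBound_mul_self_eq_zero (c := a - algebraMap ℝ A t)
    (by rw [hP.infUpperBound_sub, hP.infUpperBound_algebraMap, sub_self])
  rw [show (a - algebraMap ℝ A t) * (a - algebraMap ℝ A t)
      = a * a + algebraMap ℝ A (-2 * t) * a + algebraMap ℝ A (t * t) by
        simp only [map_mul, map_neg, map_ofNat]; ring,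
    hP.infUpperBound_add, hP.infUpperBound_add, hP.infUpperBound_algebraMap_mul,
    hP.infUpperBound_algebraMap] at h
  linear_combination h

theorem infUpperBound_mul (hP : IsTotalArchimedean P) (a b : A) :
    infUpperBound P (a * b) = infUpperBound P a * infUpperBound P b := by
  have h := hP.infUpperBound_mul_self (a + b)
  rw [show (a + b) * (a + b) = a * a + (a * b + (a * b + b * b)) by ring,
    hP.infUpperBound_add, hP.infUpperBound_add, hP.infUpperBound_add, hP.infUpperBound_add,
    hP.infUpperBound_mul_self, hP.infUpperBound_mul_self] at h
  linear_combination h / 2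

def toAlgHom (hP : IsTotalArchimedean P) : A →ₐ[ℝ] ℝ where
  toFun := infUpperBound P
  map_one' := by simpa using hP.infUpperBound_algebraMap 1
  map_mul' := hP.infUpperBound_mul
  map_zero' := by simpa using hP.infUpperBound_algebraMap 0
  map_add' := hP.infUpperBound_add
  commutes' := hP.infUpperBound_algebraMap

theorem toAlgHom_nonneg (hP : IsTotalArchimedean P) {a : A} (ha : a ∈ P) : 0 ≤ hP.toAlgHom a :=
  hP.infUpperBound_nonneg ha

end IsTotalArchimedean

/-- Jacobi's representation theorem for archimedean quadratic modules. -/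
theorem IsQuadraticModule.mem_of_forall_algHom_pos (hM : IsQuadraticModule M)
    (harch : IsArchimedeanQM M) {h : A}
    (hpos : ∀ φ : A →ₐ[ℝ] ℝ, (∀ a ∈ M, 0 ≤ φ a) → 0 < φ h) : h ∈ M := by
  by_cases hneg : (-1 : A) ∈ quadModAdjoin M (-h)
  · obtain ⟨q, hq, s, hs, hsq⟩ := hneg
    exact hM.mem_of_mul_eq_one_add harch hs hq (by linear_combination hsq)
  · obtain ⟨P, hMP, hPmax⟩ := exists_maximal_isQuadraticModule (hM.adjoin (-h)) hneg
    have hP := isTotalArchimedean_of_maximal hPmax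
      (harch.mono ((subset_quadModAdjoin (-h)).trans hMP))
    have hφh := hpos hP.toAlgHom fun a ha => hP.toAlgHom_nonneg (hMP (subset_quadModAdjoin _ ha))
    have hφnegh := hP.toAlgHom_nonneg (hMP (hM.mem_quadModAdjoin_self (-h)))
    rw [map_neg] at hφnegh
    linarith

end RealAlgebra

theorem IsQuadraticModule.isArchimedeanQM_of_natCast_sub_sum_sq_mem {σ : Type*} [Fintype σ]
    {M : Set (MvPolynomial σ ℝ)} (hM : IsQuadraticModule M) {N : ℕ}
    (hN : (N : MvPolynomial σ ℝ) - ∑ i, X i ^ 2 ∈ M) : IsArchimedeanQM M := by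
  classical
  refine hM.isArchimedeanQM_of_adjoin_eq_top (adjoin_range_X (R := ℝ)) ?_
  rintro _ ⟨i, rfl⟩
  refine ⟨N, ?_⟩
  convert hM.add_mem hN (hM.sum_mem fun j (_ : j ∈ Finset.univ.erase i) =>
    hM.sumSq_mem (IsSumSq.mul_self (X j : MvPolynomial σ ℝ))) using 1
  rw [← Finset.sum_erase_add _ _ (Finset.mem_univ i), map_natCast]
  simp only [sq]
  ring

section InQM

variable {n m : ℕ} {g : Fin m → MvPolynomial (Fin n) ℝ} {p : MvPolynomial (Fin n) ℝ}

theorem isSOS_iff_isSumSq {f : MvPolynomial (Fin n) ℝ} : IsSOS f ↔ IsSumSq f := by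
  refine ⟨fun ⟨r, s, hf⟩ => hf ▸ IsSumSq.sum_sq _ s, fun hf => ?_⟩
  induction hf with
  | zero => exact ⟨0, ![], by simp⟩
  | sq_add a _ ih =>
    obtain ⟨r, s, rfl⟩ := ih
    exact ⟨r + 1, Fin.cons a s, by simp [Fin.sum_univ_succ, sq]⟩

theorem inQM_iff : InQM g p ↔ ∃ σ₀ : MvPolynomial (Fin n) ℝ, ∃ σ : Fin m → MvPolynomial (Fin n) ℝ,
    IsSumSq σ₀ ∧ (∀ j, IsSumSq (σ j)) ∧ p = σ₀ + ∑ j, σ j * g j := by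
  simp only [InQM, isSOS_iff_isSumSq]

variable (g) in
theorem isQuadraticModule_setOf_inQM : IsQuadraticModule {p | InQM g p} where
  one_mem := inQM_iff.2 ⟨1, 0, .one, fun _ => .zero, by simp⟩
  add_mem := by
    rintro _ _ hpa hpb
    obtain ⟨a₀, a, ha₀, ha, rfl⟩ := inQM_iff.1 hpa
    obtain ⟨b₀, b, hb₀, hb, rfl⟩ := inQM_iff.1 hpb
    refine inQM_iff.2 ⟨a₀ + b₀, a + b, ha₀.add hb₀, fun j => (ha j).add (hb j), ?_⟩
    simp only [Pi.add_apply, add_mul, Finset.sum_add_distrib]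
    ring
  mul_self_mul_mem q := by
    rintro _ hpa
    obtain ⟨a₀, a, ha₀, ha, rfl⟩ := inQM_iff.1 hpa
    refine inQM_iff.2 ⟨q * q * a₀, fun j => q * q * a j, (IsSumSq.mul_self q).mul ha₀,
      fun j => (IsSumSq.mul_self q).mul (ha j), ?_⟩
    simp only [mul_add, Finset.mul_sum, mul_assoc]

theorem inQM_self (j : Fin m) : InQM g (g j) := by
  classical
  refine inQM_iff.2 ⟨0, Pi.single j 1, .zero, fun k => ?_, by simp [Pi.single_apply]⟩
  by_cases hk : k = j
  · simp [hk, IsSumSq.one]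
  · simp [hk, IsSumSq.zero]

theorem InQM.mem_of_isQuadraticModule {M : Set (MvPolynomial (Fin n) ℝ)}
    (hM : IsQuadraticModule M) (hg : ∀ j, g j ∈ M) (hp : InQM g p) : p ∈ M := by
  obtain ⟨σ₀, σ, hσ₀, hσ, rfl⟩ := inQM_iff.1 hp
  exact hM.add_mem (hM.sumSq_mem hσ₀) (hM.sum_mem fun j _ => hM.sumSq_mul_mem (hσ j) (hg j))

theorem InQM.eval_nonneg (hp : InQM g p) {x : Fin n → ℝ} (hx : ∀ j, 0 ≤ eval x (g j)) :
    0 ≤ eval x p :=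
  hp.mem_of_isQuadraticModule (isQuadraticModule_setOf_nonneg (eval x)) hx

theorem InQMT.inQM {D : ℕ} (hp : InQMT D g p) : InQM g p :=
  let ⟨σ₀, σ, hσ₀, _, hσ, hp⟩ := hp
  ⟨σ₀, σ, hσ₀, fun j => (hσ j).1, hp⟩

theorem InQM.exists_inQMT (hp : InQM g p) : ∃ D₀, ∀ D, D₀ ≤ D → InQMT D g p := by
  obtain ⟨σ₀, σ, hσ₀, hσ, rfl⟩ := hp
  refine ⟨max σ₀.totalDegree (Finset.univ.sup fun j => (σ j * g j).totalDegree),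
    fun D hD => ⟨σ₀, σ, hσ₀, (le_max_left _ _).trans hD, fun j => ⟨hσ j, ?_⟩, rfl⟩⟩
  exact ((Finset.le_sup (f := fun j => (σ j * g j).totalDegree) (Finset.mem_univ j)).trans
    (le_max_right _ _)).trans hD

/-- Putinar's Positivstellensatz. -/
theorem inQM_of_forall_eval_pos {N : ℕ}
    (hN : InQM g ((N : MvPolynomial (Fin n) ℝ) - ∑ i, X i ^ 2))
    (hpos : ∀ x : Fin n → ℝ, (∀ j, 0 ≤ eval x (g j)) → 0 < eval x p) : InQM g p := by
  have hM := isQuadraticModule_setOf_inQM g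
  refine hM.mem_of_forall_algHom_pos (hM.isArchimedeanQM_of_natCast_sub_sum_sq_mem hN)
    fun φ hφ => ?_
  rw [aeval_unique φ] at hφ ⊢
  exact hpos _ fun j => hφ _ (inQM_self j)

end InQM

theorem stmt_18_general {n m : ℕ}
    (f : MvPolynomial (Fin n) ℝ) (g : Fin m → MvPolynomial (Fin n) ℝ)
    (S : Set (Fin n → ℝ)) (hS : S = {x | ∀ j, 0 ≤ eval x (g j)})
    (hSne : S.Nonempty) (hScpt : IsCompact S)
    (harch : ∃ N : ℕ, InQM g ((N : MvPolynomial (Fin n) ℝ) - ∑ i, (X i) ^ 2))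
    (fstar : ℝ) (hfstar : fstar = sInf ((fun x => eval x f) '' S)) (hfstarpos : 0 < fstar) :
    ∃ D0 : ℕ, ∀ D : ℕ, D0 ≤ D → Even D →
      0 < sSup {b : ℝ | InQMT D g (f - C b)} ∧
      sSup {b : ℝ | InQMT D g (f - C b)} ≤ fstar := by
  obtain ⟨N, hN⟩ := harch
  have hfstar_le : ∀ x ∈ S, fstar ≤ eval x f := fun x hx =>
    hfstar ▸ csInf_le (hScpt.image (continuous_eval f)).bddBelow ⟨x, hx, rfl⟩
  have hhalf : InQM g (f - C (fstar / 2)) := inQM_of_forall_eval_pos hN fun x hx => by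
    simp only [map_sub, eval_C]
    linarith [hfstar_le x (hS ▸ hx)]
  obtain ⟨D₀, hD₀⟩ := hhalf.exists_inQMT
  refine ⟨D₀, fun D hD _ => ?_⟩
  have hle : ∀ b ∈ {b : ℝ | InQMT D g (f - C b)}, b ≤ fstar := fun b hb => by
    refine hfstar ▸ le_csInf (hSne.image _) ?_
    rintro _ ⟨x, hx, rfl⟩
    have := hb.inQM.eval_nonneg (hS ▸ hx)
    simp only [map_sub, eval_C] at this
    linarith
  exact ⟨(half_pos hfstarpos).trans_le (le_csSup ⟨fstar, hle⟩ (hD₀ D hD)),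
    csSup_le ⟨_, hD₀ D hD⟩ hle⟩

theorem stmt_18 {n m : ℕ} (hn : 1 ≤ n) (d : ℕ)
    (f : MvPolynomial (Fin n) ℝ) (g : Fin m → MvPolynomial (Fin n) ℝ)
    (hfint : ∀ σ, ∃ z : ℤ, f.coeff σ = (z : ℝ))
    (hgint : ∀ j, ∀ σ, ∃ z : ℤ, (g j).coeff σ = (z : ℝ))
    (hfdeg : f.totalDegree ≤ d) (hgdeg : ∀ j, (g j).totalDegree ≤ d)
    (S : Set (Fin n → ℝ)) (hS : S = {x | ∀ j, 0 ≤ eval x (g j)})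
    (hSne : S.Nonempty) (hScpt : IsCompact S)
    (hScube : S ⊆ Set.Icc (-1 : Fin n → ℝ) 1)
    (hSint : (interior S).Nonempty)
    (harch : ∃ N : ℕ, InQM g ((N : MvPolynomial (Fin n) ℝ) - ∑ i, (X i) ^ 2))
    (hfpos : ∀ x ∈ S, 0 < eval x f)
    (fstar : ℝ) (hfstar : fstar = sInf ((fun x => eval x f) '' S)) (hfstarpos : 0 < fstar) :
    ∃ D0 : ℕ, ∀ D : ℕ, D0 ≤ D → Even D →
      0 < sSup {b : ℝ | InQMT D g (f - C b)} ∧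
      sSup {b : ℝ | InQMT D g (f - C b)} ≤ fstar :=
  stmt_18_general f g S hS hSne hScpt harch fstar hfstar hfstarpos
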